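/- Let (R, m, k) be a local ring and E the injective hull of the R-module k. For every R-complex X with bounded homology of finite length in each degree, the natural biduality map X → Hom_R(Hom_R(X, E), E) is a quasi-isomorphism. -/

import Mathlib

/-!
Formalization conventions: `R`-complexes are modelled as `CochainComplex (ModuleCat R) ℤ`;
the paper's chain-convention homology `H_i` corresponds to `Hh X i = X.homology (-i)`.
Two complexes are "quasi-isomorphic" (isomorphic in the derived category) when they are
linked by a zigzag of quasi-isomorphisms (`qIso`).  The derived base change
`ᵠS ⊗^L_R X` is encoded by `IsDerivedBaseChange`: a complex obtained by degreewise base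
change of a (chain-)bounded-below complex of projectives quasi-isomorphic to `X`.
-/

open CategoryTheory Limits ZeroObject

abbrev Cx (R : Type) [CommRing R] := CochainComplex (ModuleCat R) ℤ

variable {R S : Type} [CommRing R] [CommRing S]

/-- Chain-convention homology: `Hh X i` is `H_i(X)`. -/
noncomputable def Hh (X : Cx R) (i : ℤ) : ModuleCat R := X.homology (-i)

/-- `X` and `Y` are isomorphic in the derived category: they are linked by a zigzag of
quasi-isomorphisms. -/
def qIso {c : ComplexShape ℤ} :
    HomologicalComplex (ModuleCat R) c → HomologicalComplex (ModuleCat R) c → Prop :=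
  Relation.EqvGen fun X Y => ∃ f : X ⟶ Y, QuasiIso f

/-- `X` is a bounded complex. -/
def bddCx {c : ComplexShape ℤ} (X : HomologicalComplex (ModuleCat R) c) : Prop :=
  ∃ a b : ℤ, ∀ i : ℤ, (i < a ∨ b < i) → IsZero (X.X i)

/-- `X` has finite injective dimension: it is quasi-isomorphic to a bounded complex of
injective modules. -/
def FiniteInjDim {c : ComplexShape ℤ} (X : HomologicalComplex (ModuleCat R) c) : Prop :=
  ∃ I, bddCx I ∧ (∀ n, Injective (I.X n)) ∧ qIso X I

/-- `X` has finite projective dimension: it is quasi-isomorphic to a bounded complex of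
projective modules. -/
def FinitePD {c : ComplexShape ℤ} (X : HomologicalComplex (ModuleCat R) c) : Prop :=
  ∃ P, bddCx P ∧ (∀ n, Projective (P.X n)) ∧ qIso X P

/-- `X` is a perfect complex: quasi-isomorphic to a bounded complex of finitely generated
projective modules. -/
def IsPerfect {c : ComplexShape ℤ} (X : HomologicalComplex (ModuleCat R) c) : Prop :=
  ∃ P, bddCx P ∧ (∀ n, Projective (P.X n) ∧ Module.Finite R (P.X n)) ∧ qIso X P

/-- `X` has degreewise finitely generated homology. -/
def homFG {c : ComplexShape ℤ} (X : HomologicalComplex (ModuleCat R) c) : Prop :=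
  ∀ i, Module.Finite R (X.homology i)

/-- `X` has degreewise finite length homology. -/
def homFL {c : ComplexShape ℤ} (X : HomologicalComplex (ModuleCat R) c) : Prop :=
  ∀ i, IsFiniteLength R (X.homology i)

/-- `H(X) ≠ 0`. -/
def homNonzero {c : ComplexShape ℤ} (X : HomologicalComplex (ModuleCat R) c) : Prop :=
  ∃ i, ¬ IsZero (X.homology i)

/-- `X` is homologically bounded. -/
def homBdd {c : ComplexShape ℤ} (X : HomologicalComplex (ModuleCat R) c) : Prop :=
  ∃ a b : ℤ, ∀ i : ℤ, (i < a ∨ b < i) → IsZero (X.homology i)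

/-- homologically bounded below in the chain convention: `H_i(X) = 0` for `i ≪ 0`. -/
def homBddBelowCh (X : Cx R) : Prop := ∃ a : ℤ, ∀ i : ℤ, i < a → IsZero (Hh X i)

/-- homologically bounded above in the chain convention: `H_i(X) = 0` for `i ≫ 0`. -/
def homBddAboveCh (X : Cx R) : Prop := ∃ b : ℤ, ∀ i : ℤ, b < i → IsZero (Hh X i)

/-- The module `M` viewed as a complex concentrated in degree `0`. -/
noncomputable def sgl (M : ModuleCat R) : Cx R :=
  (HomologicalComplex.single (ModuleCat R) (ComplexShape.up ℤ) 0).obj M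

/-- A ring is Gorenstein if it has finite injective dimension as a module over itself. -/
def IsGorenstein (R : Type) [CommRing R] : Prop := FiniteInjDim (sgl (ModuleCat.of R R))

/-- `E` is an injective hull of the residue field: an injective module containing the
residue field as an essential submodule. -/
def IsInjHullResidue (R : Type) [CommRing R] [IsLocalRing R] (E : ModuleCat R) : Prop :=
  Injective E ∧
    ∃ f : (IsLocalRing.ResidueField R) →ₗ[R] E, Function.Injective f ∧
      ∀ N : Submodule R E, N ≠ ⊥ → N ⊓ LinearMap.range f ≠ ⊥

/-- The functor `Hom_R(-, E)`. -/
noncomputable def dualF (E : ModuleCat R) : (ModuleCat R)ᵒᵖ ⥤ ModuleCat R where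
  obj M := ModuleCat.of R (M.unop →ₗ[R] E)
  map f := ModuleCat.ofHom (LinearMap.lcomp R E f.unop.hom)
  map_id := by intros; rfl
  map_comp := by intros; rfl

instance (E : ModuleCat R) : (dualF E).Additive where
  map_add {X Y f g} := by
    apply ModuleCat.hom_ext
    apply LinearMap.ext; intro φ
    apply LinearMap.ext; intro x
    exact LinearMap.map_add (φ : ↥(Opposite.unop X) →ₗ[R] ↥E) _ _

/-- The Matlis-type dual `Hom_R(X, E)` of a complex `X`, obtained by applying
`Hom_R(-, E)` degreewise. -/
noncomputable def mdual {c : ComplexShape ℤ} (E : ModuleCat R)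
    (X : HomologicalComplex (ModuleCat R) c) :
    HomologicalComplex (ModuleCat R) c.symm :=
  ((dualF E).mapHomologicalComplex c.symm).obj X.op

/-- The natural biduality map `X ⟶ Hom_R(Hom_R(X, E), E)`, given in each degree by
`x ↦ (f ↦ f x)`. -/
noncomputable def bidual {c : ComplexShape ℤ} (E : ModuleCat R)
    (X : HomologicalComplex (ModuleCat R) c) :
    X ⟶ (mdual E (mdual E X) : HomologicalComplex (ModuleCat R) c) where
  f n := ModuleCat.ofHom
    (LinearMap.flip (LinearMap.id : ((X.X n : ModuleCat R) →ₗ[R] E) →ₗ[R] _))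
  comm' := by
    intro i j hij
    apply ModuleCat.hom_ext
    apply LinearMap.ext; intro x
    apply LinearMap.ext; intro ψ
    rfl

universe u v w u'

namespace MatlisAux

variable {R : Type} [CommRing R] {E : Type v} [AddCommGroup E] [Module R E]

/-- The evaluation map `M →ₗ[R] ((M →ₗ[R] E) →ₗ[R] E)`. -/
noncomputable def ev (E : Type v) [AddCommGroup E] [Module R E]
    (M : Type u) [AddCommGroup M] [Module R M] :
    M →ₗ[R] ((M →ₗ[R] E) →ₗ[R] E) :=
  LinearMap.flip (LinearMap.id : (M →ₗ[R] E) →ₗ[R] (M →ₗ[R] E))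

@[simp] lemma ev_apply {M : Type u} [AddCommGroup M] [Module R M] (x : M) (φ : M →ₗ[R] E) :
    ev E M x φ = φ x := rfl

/-- Factorization through a map, by injectivity of `E`. -/
lemma factor_thru (hE : Module.Injective R E) {M : Type u} {N : Type w}
    [AddCommGroup M] [Module R M] [AddCommGroup N] [Module R N]
    (f : M →ₗ[R] N) (φ : M →ₗ[R] E) (h : LinearMap.ker f ≤ LinearMap.ker φ) :
    ∃ ψ : N →ₗ[R] E, ψ ∘ₗ f = φ := by
  obtain ⟨ψ, hψ⟩ := Module.Injective.extension_property R E _ _ (LinearMap.range f).subtype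
    (Submodule.injective_subtype _)
    (((LinearMap.ker f).liftQ φ h) ∘ₗ (f.quotKerEquivRange).symm.toLinearMap)
  refine ⟨ψ, LinearMap.ext fun x => ?_⟩
  have h2 := LinearMap.congr_fun hψ ⟨f x, LinearMap.mem_range_self f x⟩
  simp only [LinearMap.coe_comp, Function.comp_apply, Submodule.coe_subtype] at h2 ⊢
  rw [h2]
  erw [f.quotKerEquivRange_symm_apply_image x]
  erw [Submodule.liftQ_apply]

end MatlisAux

namespace MatlisAux
open IsLocalRing
variable {R : Type} [CommRing R] [IsLocalRing R] {E : Type v} [AddCommGroup E] [Module R E]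

variable (hE : Module.Injective R E) (f : ResidueField R →ₗ[R] E)
  (hf : Function.Injective f)

include hE f hf in
/-- Separation: a nonzero element is detected by a map to `E`. -/
lemma exists_sep {M : Type u} [AddCommGroup M] [Module R M] (x : M) (hx : x ≠ 0) :
    ∃ φ : M →ₗ[R] E, φ x ≠ 0 := by
  set σ : R →ₗ[R] M := LinearMap.toSpanSingleton R M x with hσ
  set ψ : R →ₗ[R] E := f ∘ₗ Algebra.linearMap R (ResidueField R) with hψ
  have hker : LinearMap.ker σ ≤ LinearMap.ker ψ := by
    intro r hr
    simp only [LinearMap.mem_ker, hσ, LinearMap.toSpanSingleton_apply] at hr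
    simp only [LinearMap.mem_ker, hψ, LinearMap.coe_comp, Function.comp_apply,
      Algebra.linearMap_apply]
    have hrm : r ∈ maximalIdeal R := by
      by_contra hrm
      obtain ⟨u, hu⟩ := (isUnit_iff_exists_inv.mp (not_not.mp
        (fun h => hrm ((mem_maximalIdeal r).mpr h))))
      apply hx
      calc x = (u * r) • x := by rw [mul_comm, hu, one_smul]
      _ = u • (r • x) := by rw [mul_smul]
      _ = 0 := by rw [hr, smul_zero]
    have : (algebraMap R (ResidueField R)) r = residue R r := rfl
    rw [this]
    have h0 : residue R r = 0 := Ideal.Quotient.eq_zero_iff_mem.mpr hrm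
    rw [h0, map_zero]
  obtain ⟨φ, hφ⟩ := factor_thru hE σ ψ hker
  refine ⟨φ, ?_⟩
  have h1 : φ (σ 1) = ψ 1 := LinearMap.congr_fun hφ 1
  rw [hσ] at h1
  simp only [LinearMap.toSpanSingleton_apply, one_smul] at h1
  rw [h1, hψ]
  simp only [LinearMap.coe_comp, Function.comp_apply, Algebra.linearMap_apply, map_one]
  intro h0
  have : (1 : ResidueField R) = 0 := hf (by rw [map_zero]; exact_mod_cast h0)
  exact one_ne_zero this

include hE f hf in
lemma ev_injective {M : Type u} [AddCommGroup M] [Module R M] :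
    Function.Injective (ev E M (R := R)) := by
  rw [← LinearMap.ker_eq_bot, LinearMap.ker_eq_bot']
  intro x hx
  by_contra hx0
  obtain ⟨φ, hφ⟩ := exists_sep hE f hf x hx0
  exact hφ (by simpa using LinearMap.congr_fun hx φ)

end MatlisAux

namespace MatlisAux
open IsLocalRing
variable {R : Type} [CommRing R] [IsLocalRing R] {E : Type v} [AddCommGroup E] [Module R E]

lemma submodule_residueField (N : Submodule R (ResidueField R)) : N = ⊥ ∨ N = ⊤ := by
  by_cases hN : N = ⊥
  · exact Or.inl hN
  · refine Or.inr (Submodule.eq_top_iff'.mpr fun d => ?_)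
    obtain ⟨c, hcN, hc0⟩ := Submodule.exists_mem_ne_zero_of_ne_bot hN
    obtain ⟨r, hr⟩ := residue_surjective (d * c⁻¹)
    have : d = r • c := by
      rw [Algebra.smul_def]
      show d = residue R r * c
      rw [hr, mul_assoc, inv_mul_cancel₀ hc0, mul_one]
    rw [this]
    exact N.smul_mem r hcN

lemma endo_residueField (g : ResidueField R →ₗ[R] ResidueField R) (c : ResidueField R) :
    g c = c * g 1 := by
  obtain ⟨r, hr⟩ := residue_surjective c
  have h1 : c = r • (1 : ResidueField R) := by
    rw [Algebra.smul_def, mul_one]; exact hr.symm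
  calc g c = g (r • 1) := by rw [← h1]
  _ = r • g 1 := map_smul g r 1
  _ = c * g 1 := by
      rw [Algebra.smul_def]
      show residue R r * g 1 = c * g 1
      rw [hr]

variable (f : ResidueField R →ₗ[R] E) (hf : Function.Injective f)
  (hess : ∀ N : Submodule R E, N ≠ ⊥ → N ⊓ LinearMap.range f ≠ ⊥)

/-- The map `k →ₗ Hom(k, E)`, `a ↦ (c ↦ f (c * a))`. -/
noncomputable def Phi (f : ResidueField R →ₗ[R] E) :
    ResidueField R →ₗ[R] (ResidueField R →ₗ[R] E) :=
  (LinearMap.llcomp R (ResidueField R) (ResidueField R) E f) ∘ₗ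
    (LinearMap.mul R (ResidueField R)).flip

@[simp] lemma Phi_apply (a c : ResidueField R) : Phi f a c = f (c * a) := rfl

include hf hess in
lemma Phi_surjective : Function.Surjective (Phi f) := by
  intro φ
  by_cases hφ : φ = 0
  · exact ⟨0, by rw [map_zero, hφ]⟩
  · -- φ is injective
    have hkerφ : LinearMap.ker φ = ⊥ := by
      rcases submodule_residueField (LinearMap.ker φ) with h | h
      · exact h
      · exact absurd (LinearMap.ker_eq_top.mp h) hφ
    have hφinj : Function.Injective φ := LinearMap.ker_eq_bot.mp hkerφ
    -- range φ ≤ range f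
    have hrange : LinearMap.range φ ≤ LinearMap.range f := by
      have h1 : LinearMap.range φ ≠ ⊥ := by
        intro h
        exact hφ (LinearMap.range_eq_bot.mp h)
      obtain ⟨y, hy, hy0⟩ := Submodule.exists_mem_ne_zero_of_ne_bot (hess _ h1)
      obtain ⟨hyφ, hyf⟩ := Submodule.mem_inf.mp hy
      obtain ⟨c₀, hc₀⟩ := hyφ
      have hc₀0 : c₀ ≠ 0 := by rintro rfl; rw [map_zero] at hc₀; exact hy0 hc₀.symm
      have hcomap : Submodule.comap φ (LinearMap.range f) = ⊤ := by
        rcases submodule_residueField (Submodule.comap φ (LinearMap.range f)) with h | h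
        · exfalso
          have : c₀ ∈ Submodule.comap φ (LinearMap.range f) := by
            simp only [Submodule.mem_comap, hc₀]; exact hyf
          rw [h] at this
          exact hc₀0 this
        · exact h
      intro y ⟨c, hc⟩
      have : c ∈ Submodule.comap φ (LinearMap.range f) := by rw [hcomap]; trivial
      rw [← hc]; exact this
    -- define g := f⁻¹ ∘ φ
    set g : ResidueField R →ₗ[R] ResidueField R :=
      ((LinearEquiv.ofInjective f hf).symm.toLinearMap) ∘ₗ
        (φ.codRestrict (LinearMap.range f) (fun c => hrange ⟨c, rfl⟩)) with hg
    have hfg : ∀ c, f (g c) = φ c := by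
      intro c
      have : f (g c) = ((LinearEquiv.ofInjective f hf) (g c) : E) := rfl
      rw [this, hg]
      simp only [LinearMap.coe_comp, Function.comp_apply, LinearEquiv.coe_coe]
      rw [LinearEquiv.apply_symm_apply]
      rfl
    refine ⟨g 1, LinearMap.ext fun c => ?_⟩
    rw [Phi_apply, ← hfg c, endo_residueField g c]

include hf hess in
lemma ev_surjective_residueField : Function.Surjective (ev E (ResidueField R) (R := R)) := by
  intro ξ
  obtain ⟨b, hb⟩ := Phi_surjective f hf hess (ξ ∘ₗ Phi f)
  refine ⟨b, LinearMap.ext fun φ => ?_⟩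
  obtain ⟨a, rfl⟩ := Phi_surjective f hf hess φ
  have h1 : ξ (Phi f a) = Phi f b a := LinearMap.congr_fun hb.symm a
  rw [ev_apply, Phi_apply, h1, Phi_apply, mul_comm]

end MatlisAux

namespace MatlisAux
open IsLocalRing
variable {R : Type} [CommRing R] {E : Type v} [AddCommGroup E] [Module R E]

lemma ev_surjective_of_equiv {M : Type u} {N : Type w} [AddCommGroup M] [Module R M]
    [AddCommGroup N] [Module R N] (e : M ≃ₗ[R] N)
    (h : Function.Surjective (ev E M (R := R))) :
    Function.Surjective (ev E N (R := R)) := by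
  intro ξ
  obtain ⟨m, hm⟩ := h (ξ ∘ₗ (LinearMap.lcomp R E e.symm.toLinearMap))
  refine ⟨e m, LinearMap.ext fun φ => ?_⟩
  have h1 := LinearMap.congr_fun hm (φ ∘ₗ e.toLinearMap)
  simp only [ev_apply, LinearMap.lcomp_apply', LinearMap.coe_comp, Function.comp_apply] at h1
  have h2 : (φ ∘ₗ e.toLinearMap) ∘ₗ e.symm.toLinearMap = φ := by
    ext x; simp
  rw [h2] at h1
  simpa using h1

/-- Step for a short exact sequence `0 → N → M → P → 0`. -/
lemma ev_surjective_of_ses (hE : Module.Injective R E)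
    {N : Type u} {M : Type w} {P : Type u'}
    [AddCommGroup N] [Module R N] [AddCommGroup M] [Module R M] [AddCommGroup P] [Module R P]
    (i : N →ₗ[R] M) (p : M →ₗ[R] P) (hp : Function.Surjective p)
    (hex : LinearMap.range i = LinearMap.ker p)
    (hN : Function.Surjective (ev E N (R := R))) (hP : Function.Surjective (ev E P (R := R))) :
    Function.Surjective (ev E M (R := R)) := by
  intro ξ
  -- push ξ to DDP and lift
  obtain ⟨z, hz⟩ := hP (ξ ∘ₗ LinearMap.lcomp R E p)
  obtain ⟨m, rfl⟩ := hp z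
  set ξ' : ((M →ₗ[R] E) →ₗ[R] E) := ξ - ev E M m with hξ'
  have hker : ∀ ψ : P →ₗ[R] E, ξ' (ψ ∘ₗ p) = 0 := by
    intro ψ
    have h1 := LinearMap.congr_fun hz ψ
    simp only [ev_apply, LinearMap.lcomp_apply', LinearMap.coe_comp, Function.comp_apply] at h1
    simp only [hξ', LinearMap.sub_apply, ev_apply]
    rw [← h1]
    simp
  -- factor ξ' through Di
  have hkerle : LinearMap.ker (LinearMap.lcomp R E i : (M →ₗ[R] E) →ₗ[R] (N →ₗ[R] E)) ≤
      LinearMap.ker ξ' := by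
    intro φ' hφ'
    simp only [LinearMap.mem_ker, LinearMap.lcomp_apply'] at hφ'
    have hφ'i : ∀ x ∈ LinearMap.ker p, φ' x = 0 := by
      intro x hx
      rw [← hex] at hx
      obtain ⟨n, rfl⟩ := hx
      exact LinearMap.congr_fun hφ' n
    obtain ⟨ψ, hψ⟩ := factor_thru hE p φ' (fun x hx => hφ'i x hx)
    simp only [LinearMap.mem_ker]
    rw [← hψ]
    exact hker ψ
  obtain ⟨η, hη⟩ := factor_thru hE (LinearMap.lcomp R E i) ξ' hkerle
  obtain ⟨n, rfl⟩ := hN η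
  refine ⟨m + i n, LinearMap.ext fun φ => ?_⟩
  have h2 := LinearMap.congr_fun hη φ
  simp only [LinearMap.coe_comp, Function.comp_apply, LinearMap.lcomp_apply', ev_apply] at h2
  simp only [hξ', LinearMap.sub_apply, ev_apply] at h2
  simp only [map_add, LinearMap.add_apply, ev_apply]
  rw [h2]
  abel

variable [IsLocalRing R]

lemma ev_surjective_of_simple (hE : Module.Injective R E)
    (f : ResidueField R →ₗ[R] E) (hf : Function.Injective f)
    (hess : ∀ N : Submodule R E, N ≠ ⊥ → N ⊓ LinearMap.range f ≠ ⊥)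
    {S : Type u} [AddCommGroup S] [Module R S] [hS : IsSimpleModule R S] :
    Function.Surjective (ev E S (R := R)) := by
  obtain ⟨I, hI, ⟨e⟩⟩ := isSimpleModule_iff_quot_maximal.mp hS
  have hIm : I = maximalIdeal R := eq_maximalIdeal hI
  subst hIm
  exact ev_surjective_of_equiv e.symm (ev_surjective_residueField f hf hess)

lemma ev_surjective_of_finiteLength (hE : Module.Injective R E)
    (f : ResidueField R →ₗ[R] E) (hf : Function.Injective f)
    (hess : ∀ N : Submodule R E, N ≠ ⊥ → N ⊓ LinearMap.range f ≠ ⊥)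
    {M : Type u} [AddCommGroup M] [Module R M]
    (h : IsFiniteLength R M) : Function.Surjective (ev E M (R := R)) := by
  induction h with
  | of_subsingleton =>
    intro ξ
    refine ⟨0, LinearMap.ext fun φ => ?_⟩
    have h0 : φ = 0 := LinearMap.ext fun x => by rw [Subsingleton.elim x 0]; simp
    rw [ev_apply, h0]
    simp
  | of_simple_quotient h ih =>
    rename_i M' _ _ N _
    exact ev_surjective_of_ses hE N.subtype N.mkQ (Submodule.mkQ_surjective N)
      (by rw [Submodule.ker_mkQ, Submodule.range_subtype]) ih
      (ev_surjective_of_simple hE f hf hess)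

lemma ev_bijective_of_finiteLength (hE : Module.Injective R E)
    (f : ResidueField R →ₗ[R] E) (hf : Function.Injective f)
    (hess : ∀ N : Submodule R E, N ≠ ⊥ → N ⊓ LinearMap.range f ≠ ⊥)
    {M : Type u} [AddCommGroup M] [Module R M]
    (h : IsFiniteLength R M) : Function.Bijective (ev E M (R := R)) :=
  ⟨ev_injective hE f hf, ev_surjective_of_finiteLength hE f hf hess h⟩

end MatlisAux

namespace MatlisAux
open IsLocalRing LinearMap
variable {R : Type} [CommRing R] [IsLocalRing R] {E : Type v} [AddCommGroup E] [Module R E]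
variable {A B C : Type u} [AddCommGroup A] [Module R A] [AddCommGroup B] [Module R B]
  [AddCommGroup C] [Module R C]

variable (hE : Module.Injective R E) (f : ResidueField R →ₗ[R] E)
  (hf : Function.Injective f)
  (hess : ∀ N : Submodule R E, N ≠ ⊥ → N ⊓ LinearMap.range f ≠ ⊥)
  (d₁ : A →ₗ[R] B) (d₂ : B →ₗ[R] C)
  (t : A →ₗ[R] LinearMap.ker d₂) (ht : ∀ a, (t a : B) = d₁ a)

include hE f hf ht in
lemma chase_inj (x : B) (hx : d₂ x = 0)
    (hξ : ∃ ξ : (A →ₗ[R] E) →ₗ[R] E, ξ ∘ₗ (d₁.lcomp R E) = ev E B x) :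
    ∃ a, d₁ a = x := by
  by_contra hcon
  push_neg at hcon
  set H := (LinearMap.ker d₂ ⧸ LinearMap.range t)
  have hx0 : (Submodule.Quotient.mk (⟨x, hx⟩ : LinearMap.ker d₂) : H) ≠ 0 := by
    intro h0
    obtain ⟨a, ha⟩ := (Submodule.Quotient.mk_eq_zero _).mp h0
    exact hcon a (by rw [← ht a, ha])
  obtain ⟨h, hh⟩ := exists_sep hE f hf _ hx0
  obtain ⟨φ, hφ⟩ := factor_thru hE (LinearMap.ker d₂).subtype
    (h ∘ₗ (LinearMap.range t).mkQ) (by rw [Submodule.ker_subtype]; exact bot_le)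
  obtain ⟨ξ, hξ⟩ := hξ
  have hφd : φ ∘ₗ d₁ = 0 := by
    ext a
    have h1 : φ ((LinearMap.ker d₂).subtype (t a)) = h (Submodule.Quotient.mk (t a)) :=
      LinearMap.congr_fun hφ (t a)
    simp only [Submodule.coe_subtype, ht a] at h1
    have h2 : (Submodule.Quotient.mk (t a) : H) = 0 :=
      (Submodule.Quotient.mk_eq_zero _).mpr ⟨a, rfl⟩
    simp only [LinearMap.coe_comp, Function.comp_apply, LinearMap.zero_apply]
    rw [h1, h2, map_zero]
  have h3 := LinearMap.congr_fun hξ φ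
  simp only [LinearMap.coe_comp, Function.comp_apply, LinearMap.lcomp_apply', ev_apply] at h3
  rw [hφd, map_zero] at h3
  apply hh
  have h4 : φ x = h (Submodule.Quotient.mk ⟨x, hx⟩) := LinearMap.congr_fun hφ ⟨x, hx⟩
  rw [← h4, ← h3]

/-- The map `ker(D d₁) →ₗ Hom(H, E)`. -/
noncomputable def theta0 :
    LinearMap.ker (d₁.lcomp R E) →ₗ[R]
      ((LinearMap.ker d₂ ⧸ LinearMap.range t) →ₗ[R] E) where
  toFun φ := (LinearMap.range t).liftQ (φ.val ∘ₗ (LinearMap.ker d₂).subtype)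
    (by
      rintro _ ⟨a, rfl⟩
      have h1 : φ.val (d₁ a) = 0 := by
        have := φ.2
        simp only [LinearMap.mem_ker] at this
        exact LinearMap.congr_fun this a
      simp only [LinearMap.mem_ker, LinearMap.coe_comp, Function.comp_apply,
        Submodule.coe_subtype, ht a, h1])
  map_add' φ ψ := Submodule.linearMap_qext _ (by ext x; rfl)
  map_smul' r φ := Submodule.linearMap_qext _ (by ext x; rfl)

lemma theta0_apply (φ : LinearMap.ker (d₁.lcomp R E)) (y : LinearMap.ker d₂) :
    theta0 d₁ d₂ t ht φ (Submodule.Quotient.mk y) = φ.val y := rfl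

include hE f hf hess ht in
lemma chase_surj
    (hfl : IsFiniteLength R (LinearMap.ker d₂ ⧸ LinearMap.range t))
    (ζ : (B →ₗ[R] E) →ₗ[R] E) (hζ : ζ ∘ₗ (d₂.lcomp R E) = 0) :
    ∃ (x : B) (_ : d₂ x = 0) (ξ : (A →ₗ[R] E) →ₗ[R] E),
      ev E B x = ζ + ξ ∘ₗ (d₁.lcomp R E) := by
  classical
  set Θ := theta0 (E := E) d₁ d₂ t ht with hΘ
  set ζK : LinearMap.ker (d₁.lcomp R E) →ₗ[R] E :=
    ζ ∘ₗ (LinearMap.ker (d₁.lcomp R E)).subtype with hζK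
  have hker : LinearMap.ker Θ ≤ LinearMap.ker ζK := by
    intro φ hφ
    simp only [LinearMap.mem_ker] at hφ ⊢
    have hvan : ∀ y ∈ LinearMap.ker d₂, φ.val y = 0 := by
      intro y hy
      have := LinearMap.congr_fun hφ (Submodule.Quotient.mk ⟨y, hy⟩)
      rw [hΘ, theta0_apply] at this
      simpa using this
    obtain ⟨ψ, hψ⟩ := factor_thru hE d₂ φ.val hvan
    have h1 := LinearMap.congr_fun hζ ψ
    simp only [LinearMap.coe_comp, Function.comp_apply, LinearMap.lcomp_apply',
      LinearMap.zero_apply] at h1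
    rw [hψ] at h1
    simpa [hζK] using h1
  obtain ⟨lam, hlam⟩ := factor_thru hE Θ ζK hker
  obtain ⟨xb, hxb⟩ := ev_surjective_of_finiteLength hE f hf hess hfl lam
  obtain ⟨⟨x, hx⟩, rfl⟩ := Submodule.Quotient.mk_surjective _ xb
  have hkill : ∀ φ : LinearMap.ker (d₁.lcomp R E), ζ φ.val = φ.val x := by
    intro φ
    have h1 : lam (Θ φ) = ζK φ := LinearMap.congr_fun hlam φ
    rw [← hxb] at h1
    simp only [ev_apply] at h1
    rw [hΘ, theta0_apply] at h1
    simpa [hζK] using h1.symm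
  have hklle : LinearMap.ker (d₁.lcomp R E) ≤ LinearMap.ker (ζ - ev E B x) := by
    intro φ hφ
    simp only [LinearMap.mem_ker, LinearMap.sub_apply, ev_apply]
    have := hkill ⟨φ, hφ⟩
    simp only at this
    rw [this, sub_self]
  obtain ⟨ξ, hξ⟩ := factor_thru hE (d₁.lcomp R E) (ζ - ev E B x) hklle
  refine ⟨x, hx, -ξ, ?_⟩
  have h5 : (-ξ) ∘ₗ (d₁.lcomp R E) = (ev E B) x - ζ := by
    rw [LinearMap.neg_comp, hξ]; abel
  rw [h5]; abel

end MatlisAux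

namespace MatlisAux
open CategoryTheory Limits

universe u₁

variable {R : Type} [CommRing R]

lemma quasiIso_of_concrete {S₁ S₂ : ShortComplex (ModuleCat.{u₁} R)} (φ : S₁ ⟶ S₂)
    (hinj : ∀ (x : S₁.X₂), S₁.g x = 0 → (∃ ξ, S₂.f ξ = φ.τ₂ x) → ∃ a, S₁.f a = x)
    (hsurj : ∀ (y : S₂.X₂), S₂.g y = 0 → ∃ (x : S₁.X₂) (_ : S₁.g x = 0) (ξ : S₂.X₁),
      φ.τ₂ x = y + S₂.f ξ) :
    ShortComplex.QuasiIso φ := by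
  have hc23 : ∀ x : S₁.X₂, S₂.g (φ.τ₂ x) = φ.τ₃ (S₁.g x) := fun x =>
    (ConcreteCategory.congr_hom φ.comm₂₃ x : _)
  have hc12 : ∀ a : S₁.X₁, S₂.f (φ.τ₁ a) = φ.τ₂ (S₁.f a) := fun a =>
    (ConcreteCategory.congr_hom φ.comm₁₂ a : _)
  have hmem : ∀ x ∈ LinearMap.ker S₁.g.hom, φ.τ₂ x ∈ LinearMap.ker S₂.g.hom := by
    intro x hx
    simp only [LinearMap.mem_ker] at hx ⊢
    rw [hc23, hx, map_zero]
  set φK' : LinearMap.ker S₁.g.hom →ₗ[R] LinearMap.ker S₂.g.hom :=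
    φ.τ₂.hom.restrict hmem with hφK'
  have hle : LinearMap.range S₁.moduleCatToCycles ≤
      Submodule.comap φK' (LinearMap.range S₂.moduleCatToCycles) := by
    rintro _ ⟨a, rfl⟩
    refine ⟨φ.τ₁ a, Subtype.ext ?_⟩
    show S₂.f (φ.τ₁ a) = φ.τ₂ (S₁.f a)
    exact hc12 a
  set φH' : (LinearMap.ker S₁.g.hom ⧸ LinearMap.range S₁.moduleCatToCycles) →ₗ[R]
      (LinearMap.ker S₂.g.hom ⧸ LinearMap.range S₂.moduleCatToCycles) :=
    Submodule.mapQ _ _ φK' hle with hφH'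
  let γ : ShortComplex.LeftHomologyMapData φ S₁.moduleCatLeftHomologyData
      S₂.moduleCatLeftHomologyData :=
    { φK := ModuleCat.ofHom φK'
      φH := ModuleCat.ofHom φH'
      commi := by ext x; rfl
      commf' := by ext a; exact Subtype.ext (hc12 a).symm
      commπ := by
        ext x
        exact (Submodule.mapQ_apply _ _ _ x : φH' (Submodule.Quotient.mk x) = _) }
  rw [γ.quasiIso_iff]
  have hbij : Function.Bijective φH' := by
    constructor
    · rw [← LinearMap.ker_eq_bot, LinearMap.ker_eq_bot']
      intro m hm
      obtain ⟨⟨x, hx⟩, rfl⟩ := Submodule.Quotient.mk_surjective _ m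
      rw [show φH' (Submodule.Quotient.mk ⟨x, hx⟩) = Submodule.Quotient.mk (φK' ⟨x, hx⟩)
        from Submodule.mapQ_apply _ _ _ _, Submodule.Quotient.mk_eq_zero] at hm
      obtain ⟨ξ, hξ⟩ := hm
      have hξ2 : S₂.f ξ = φ.τ₂ x := congrArg Subtype.val hξ
      obtain ⟨a, ha⟩ := hinj x hx ⟨ξ, hξ2⟩
      rw [Submodule.Quotient.mk_eq_zero]
      exact ⟨a, Subtype.ext ha⟩
    · intro m
      obtain ⟨⟨y, hy⟩, rfl⟩ := Submodule.Quotient.mk_surjective _ m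
      obtain ⟨x, hx, ξ, hxy⟩ := hsurj y hy
      refine ⟨Submodule.Quotient.mk ⟨x, hx⟩, ?_⟩
      rw [show φH' (Submodule.Quotient.mk ⟨x, hx⟩) = Submodule.Quotient.mk (φK' ⟨x, hx⟩)
        from Submodule.mapQ_apply _ _ _ _, ← sub_eq_zero, ← Submodule.Quotient.mk_sub,
        Submodule.Quotient.mk_eq_zero]
      refine ⟨ξ, Subtype.ext ?_⟩
      have : (φK' ⟨x, hx⟩ : S₂.X₂) = φ.τ₂ x := rfl
      show S₂.f ξ = (φK' ⟨x, hx⟩ : S₂.X₂) - y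
      rw [this, hxy]
      abel
  exact (LinearEquiv.ofBijective φH' hbij).toModuleIso.isIso_hom

end MatlisAux

/-- **Lemma (Matlis biduality).** Let `(R,𝔪,k)` be a (Noetherian) local ring, `E` the
injective hull of `k`.  For every `R`-complex `X` with bounded homology of finite length
in each degree, the natural biduality map `X ⟶ Hom_R(Hom_R(X,E),E)` is a
quasi-isomorphism. -/
theorem bidual_quasiIso
    [IsLocalRing R] [IsNoetherianRing R] (E : ModuleCat R) (hE : IsInjHullResidue R E)
    (X : Cx R) (hbdd : homBdd X) (hfl : homFL X) :
    QuasiIso (bidual E X) := by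
  classical
  obtain ⟨hEinj, f, hf, hess'⟩ := hE
  have hess : ∀ N : Submodule R E, N ≠ ⊥ → N ⊓ LinearMap.range f ≠ ⊥ := hess'
  have hmodinj : Module.Injective R E :=
    Module.injective_module_of_injective_object R E (inj := hEinj)
  refine ⟨fun i => ?_⟩
  rw [quasiIsoAt_iff' _ (i-1) i (i+1) (by simp) (by simp)]
  set d₁ : (X.X (i-1) : Type _) →ₗ[R] X.X i := (X.d (i-1) i).hom with hd₁
  set d₂ : (X.X i : Type _) →ₗ[R] X.X (i+1) := (X.d i (i+1)).hom with hd₂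
  set S₁ : ShortComplex (ModuleCat R) :=
    (HomologicalComplex.shortComplexFunctor' (ModuleCat R) (ComplexShape.up ℤ)
      (i-1) i (i+1)).obj X with hS₁
  set t : (X.X (i-1) : Type _) →ₗ[R] LinearMap.ker d₂ := S₁.moduleCatToCycles with htdef
  have ht : ∀ a, (t a : X.X i) = d₁ a := fun a => rfl
  have hfl' : IsFiniteLength R (LinearMap.ker d₂ ⧸ LinearMap.range t) := by
    have e1 : X.homology i ≅ S₁.homology :=
      X.homologyIsoSc' (i-1) i (i+1) (by simp) (by simp)
    have e2 : S₁.homology ≅ S₁.moduleCatLeftHomologyData.H := S₁.moduleCatHomologyIso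
    exact (e1 ≪≫ e2).toLinearEquiv.isFiniteLength (hfl i)
  apply MatlisAux.quasiIso_of_concrete
  · intro x hx hξ
    exact MatlisAux.chase_inj hmodinj f hf d₁ d₂ t ht x hx hξ
  · intro y hy
    exact MatlisAux.chase_surj hmodinj f hf hess d₁ d₂ t ht hfl' y hy
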